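/- arXiv:1602.08655 — 9 statements merged into one kernel-verified Lean document; each statement's English description precedes it below -/
import Mathlib

section
/- For all natural numbers i and k with k ≥ 1 and all complex t, define S_{i,k}(t) = Σ_{i_1+⋯+i_k=i, each i_j ≥ 1} (t−i_1+1)(t−i_1−i_2+1)⋯(t−i+1). Then for k ≤ i, S_{i,k}(t) = (t−i+1) · Σ_{l=0}^{k−1} s(i−1, l+i−k) · C(l+i−k, l) · t^l, where s(·,·) are Stirling numbers of the first kind. -/
open Finset

/-- `p_{i_1,…,i_k}(t) = (t−i_1+1)(t−i_1−i_2+1)⋯(t−i+1)`, a product over the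
partial sums of the list `l = (i_1,…,i_k)`. -/
noncomputable def pProd (l : List ℕ) (t : ℂ) : ℂ :=
  ∏ j ∈ Finset.range l.length, (t - ((l.take (j + 1)).sum : ℂ) + 1)

/-- `S_{i,k}(t)`: the sum of `p_{i_1,…,i_k}(t)` over all compositions of `i` of length `k`. -/
noncomputable def Spoly (i k : ℕ) (t : ℂ) : ℂ :=
  ∑ c ∈ Finset.univ.filter (fun c : Composition i => c.length = k), pProd c.blocks t

/-- Signed Stirling numbers of the first kind, via
`s(n+1,m) = s(n,m−1) − n·s(n,m)`. -/
def stirling1 : ℕ → ℕ → ℤ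
  | 0, 0 => 1
  | 0, _ + 1 => 0
  | n + 1, 0 => -(n : ℤ) * stirling1 n 0
  | n + 1, m + 1 => stirling1 n m - (n : ℤ) * stirling1 n (m + 1)

/-!
A composition of `i` of length `k` is determined by its inner partial sums
`s_1 < ⋯ < s_{k-1}` in `{1, …, i-1}`, and its product is `(t-i+1) ∏ⱼ (t-sⱼ+1)`. Hence
`S_{i,k}(t) / (t-i+1)` is the elementary symmetric polynomial `e_{k-1}` in `t, t-1, …, t-i+2`,
which by Vieta is the coefficient of `X^{i-k}` in `∏_{j<i-1} (X+t-j) = ∑ₘ s(i-1,m) (X+t)^m`;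
expanding `(X+t)^m` binomially gives the formula.
-/

open Polynomial

theorem coeff_descPochhammer_int_eq_stirling1 (n m : ℕ) :
    (descPochhammer ℤ n).coeff m = stirling1 n m := by
  induction n generalizing m with
  | zero => cases m <;> simp [stirling1, coeff_one]
  | succ n ih =>
    rw [descPochhammer_succ_right, ← C_eq_natCast]
    cases m with
    | zero => simp only [mul_coeff_zero, ih, coeff_sub, coeff_X_zero, coeff_C_zero, stirling1]; ring
    | succ m => rw [coeff_mul_X_sub_C, ih, ih, stirling1]; ring

theorem prod_range_sub_eq_sum_stirling1 {R : Type*} [CommRing R] (n : ℕ) (x : R) :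
    ∏ j ∈ range n, (x - j) = ∑ m ∈ range (n + 1), (stirling1 n m : R) * x ^ m := by
  rw [← descPochhammer_eval_eq_prod_range, ← descPochhammer_map (Int.castRingHom R), eval_map,
    (descPochhammer ℤ n).as_sum_range' (n + 1) (by rw [descPochhammer_natDegree]; omega)]
  simp [eval₂_finsetSum, coeff_descPochhammer_int_eq_stirling1]

theorem sum_powersetCard_prod_sub_eq_sum_stirling1 {R : Type*} [CommRing R] {n r : ℕ}
    (hr : r ≤ n) (t : R) :
    ∑ A ∈ powersetCard r (univ : Finset (Fin n)), ∏ a ∈ A, (t - (a : ℕ)) =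
      ∑ l ∈ range (r + 1),
        (stirling1 n (n - r + l) : R) * ((n - r + l).choose l : R) * t ^ l := by
  have hprod : ∏ a : Fin n, (X + C (t - (a : ℕ))) =
      ∑ m ∈ range (n + 1), (stirling1 n m : R[X]) * (X + C t) ^ m := by
    rw [Fin.prod_univ_eq_prod_range (fun j => X + C (t - (j : R))) n,
      ← prod_range_sub_eq_sum_stirling1]
    refine prod_congr rfl fun j _ => ?_
    rw [C_sub, C_eq_natCast, add_sub_assoc]
  have vieta := prod_X_add_C_coeff (univ : Finset (Fin n)) (fun a => t - (a : ℕ))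
    (k := n - r) (by simp)
  rw [card_univ, Fintype.card_fin, Nat.sub_sub_self hr, hprod] at vieta
  rw [← vieta, finsetSum_coeff, show n + 1 = (n - r) + (r + 1) by omega, sum_range_add,
    sum_eq_zero fun m hm => ?_, zero_add]
  · refine sum_congr rfl fun l _ => ?_
    rw [← C_eq_intCast, coeff_C_mul, coeff_X_add_C_pow, Nat.add_sub_cancel_left,
      Nat.choose_symm_add]
    ring
  · rw [← C_eq_intCast, coeff_C_mul, coeff_X_add_C_pow,
      Nat.choose_eq_zero_of_lt (mem_range.mp hm)]
    simp

namespace Composition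

variable {n : ℕ} (c : Composition n)

theorem sizeUpTo_injOn : Set.InjOn c.sizeUpTo (Set.Iic c.length) := fun p hp q hq h => by
  simpa using c.boundary.injective (a₁ := ⟨p, Nat.lt_succ_of_le hp⟩)
    (a₂ := ⟨q, Nat.lt_succ_of_le hq⟩) (Fin.ext h)

/-- `a : Fin (n - 1)` lies in the set attached to `c` when `a + 1` is a boundary of `c`. -/
theorem map_compositionAsSetEquiv :
    (compositionAsSetEquiv n c.toCompositionAsSet).map
        (Fin.valEmbedding.trans (addRightEmbedding 1)) =
      (range (c.length - 1)).image fun j => c.sizeUpTo (j + 1) := by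
  ext x
  simp only [compositionAsSetEquiv, Set.toFinset_ofPred, Equiv.coe_fn_mk,
    toCompositionAsSet_boundaries, boundaries, boundary, mem_map, mem_univ,
    RelEmbedding.coe_toEmbedding, OrderEmbedding.coe_ofStrictMono, Fin.mk.injEq, true_and,
    mem_filter, Function.Embedding.trans_apply, Fin.valEmbedding_apply, addRightEmbedding_apply,
    mem_image, mem_range]
  constructor
  · rintro ⟨a, ⟨j, hj⟩, rfl⟩
    have hj0 : (j : ℕ) ≠ 0 := fun h => by
      rw [h, sizeUpTo_zero] at hj
      omega
    have hjlen : (j : ℕ) ≠ c.length := fun h => by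
      rw [h, sizeUpTo_length] at hj
      omega
    exact ⟨j - 1, by omega, by rw [Nat.sub_add_cancel (by omega), hj, add_comm]⟩
  · rintro ⟨j, hj, rfl⟩
    have hpos := c.sizeUpTo_strict_mono (i := j) (by omega)
    have hlt := (c.sizeUpTo_strict_mono (i := j + 1) (by omega)).trans_le (c.sizeUpTo_le _)
    exact ⟨⟨c.sizeUpTo (j + 1) - 1, by omega⟩,
      ⟨⟨j + 1, by omega⟩, by dsimp only; omega⟩, by dsimp only; omega⟩

theorem injOn_sizeUpTo_succ : Set.InjOn (fun j => c.sizeUpTo (j + 1)) (range (c.length - 1)) :=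
  fun p hp q hq h => by
    have := c.sizeUpTo_injOn (show p + 1 ≤ c.length by simp at hp; omega)
      (show q + 1 ≤ c.length by simp at hq; omega) h
    omega

theorem card_compositionAsSetEquiv :
    (compositionAsSetEquiv n c.toCompositionAsSet).card = c.length - 1 := by
  rw [← card_map (Fin.valEmbedding.trans (addRightEmbedding 1)), map_compositionAsSetEquiv,
    card_image_of_injOn c.injOn_sizeUpTo_succ, card_range]

theorem prod_compositionAsSetEquiv {M : Type*} [CommMonoid M] (f : ℕ → M) :
    ∏ a ∈ compositionAsSetEquiv n c.toCompositionAsSet, f (a + 1) =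
      ∏ j ∈ range (c.length - 1), f (c.sizeUpTo (j + 1)) := by
  rw [← prod_image c.injOn_sizeUpTo_succ, ← map_compositionAsSetEquiv, prod_map]
  rfl

theorem pProd_blocks_eq (hn : 0 < n) (t : ℂ) :
    pProd c.blocks t =
      (t - n + 1) * ∏ a ∈ compositionAsSetEquiv n c.toCompositionAsSet, (t - (a : ℕ)) := by
  obtain ⟨m, hm⟩ := Nat.exists_eq_add_one_of_ne_zero (c.length_pos_of_pos hn).ne'
  have hlast : c.sizeUpTo (m + 1) = n := hm ▸ c.sizeUpTo_length
  have hprod := c.prod_compositionAsSetEquiv fun x => t - (x : ℂ) + 1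
  push_cast at hprod
  simp only [sub_add_eq_sub_sub, sub_add_cancel] at hprod
  rw [hprod, hm, Nat.add_sub_cancel, pProd, blocks_length, hm, prod_range_succ, mul_comm]
  change (t - c.sizeUpTo (m + 1) + 1) * ∏ j ∈ range m, (t - c.sizeUpTo (j + 1) + 1) = _
  rw [hlast]

end Composition

theorem stmt0 (i k : ℕ) (hk : 1 ≤ k) (hki : k ≤ i) (t : ℂ) :
    Spoly i k t =
      (t - (i : ℂ) + 1) *
        ∑ l ∈ Finset.range k,
          (stirling1 (i - 1) (l + i - k) : ℂ) * ((l + i - k).choose l : ℂ) * t ^ l := by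
  have hi : 0 < i := by omega
  have hsubsets : ∑ l ∈ range k, (stirling1 (i - 1) (l + i - k) : ℂ) *
      ((l + i - k).choose l : ℂ) * t ^ l =
      ∑ A ∈ powersetCard (k - 1) (univ : Finset (Fin (i - 1))),
        ∏ a ∈ A, (t - (a : ℕ)) := by
    rw [sum_powersetCard_prod_sub_eq_sum_stirling1 (by omega), Nat.sub_add_cancel hk]
    refine sum_congr rfl fun l _ => ?_
    rw [show i - 1 - (k - 1) + l = l + i - k by omega]
  rw [hsubsets, mul_sum, Spoly]
  refine sum_equiv ((compositionEquiv i).trans (compositionAsSetEquiv i)) (fun c => ?_)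
    (fun c _ => c.pProd_blocks_eq hi t)
  have := c.length_pos_of_pos hi
  simp only [mem_filter_univ, Equiv.trans_apply, mem_powersetCard_univ]
  change c.length = k ↔ (compositionAsSetEquiv i c.toCompositionAsSet).card = k - 1
  rw [c.card_compositionAsSetEquiv]
  omega
end

section
/- For all natural numbers i ≥ 1 and all complex numbers t, x: Σ_{k=1}^{i} Σ_{i_1+⋯+i_k=i} p_{i_1,…,i_k}(t) · x^k = (xt+1)(x(t−1)+1)⋯(x(t−i+2)+1) · x(t−i+1), where the inner sum runs over compositions of i of length k. -/
open Finset

/-! A composition `c` of `i ≥ 1` is determined by its set `S ⊆ {1, …, i - 1}` of interior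
partial sums, and its length is `|S| + 1`. Hence `p_c(t) x^k = x(t-i+1) ∏_{s ∈ S} x(t-s+1)`,
and the sum over all subsets `S` factors as `x(t-i+1) ∏_{s=1}^{i-1} (x(t-s+1) + 1)`. -/

namespace Composition

variable {n : ℕ}

theorem mem_compositionAsSetEquiv {c : Composition n} {j : Fin (n - 1)} :
    j ∈ compositionAsSetEquiv n c.toCompositionAsSet ↔
      (⟨j + 1, by omega⟩ : Fin (n + 1)) ∈ c.boundaries := by
  simp only [compositionAsSetEquiv, Equiv.coe_fn_mk, Set.toFinset_ofPred, mem_filter_univ]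
  simp [add_comm]

theorem map_val_boundaries_erase_zero (c : Composition n) (hn : 1 ≤ n) :
    (c.boundaries.erase 0).map Fin.valEmbedding =
      insert n ((compositionAsSetEquiv n c.toCompositionAsSet).map
        (Fin.valEmbedding.trans (addRightEmbedding 1))) := by
  ext b
  simp only [mem_map, mem_erase, Fin.valEmbedding_apply, mem_insert, mem_compositionAsSetEquiv,
    Function.Embedding.trans_apply, addRightEmbedding_apply]
  constructor
  · rintro ⟨a, ⟨ha0, ha⟩, rfl⟩
    rcases eq_or_ne a (Fin.last n) with rfl | hlast
    · exact Or.inl rfl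
    · have hlt : (a : ℕ) < n := Fin.val_lt_last hlast
      have hpos : (a : ℕ) ≠ 0 := Fin.val_ne_zero_iff.2 ha0
      refine Or.inr ⟨⟨a - 1, by omega⟩, ?_, by dsimp only; omega⟩
      convert ha using 2
      dsimp only; omega
  · rintro (rfl | ⟨j, hj, rfl⟩)
    · refine ⟨Fin.last b, ⟨fun h => ?_, c.toCompositionAsSet.getLast_mem⟩, rfl⟩
      simp only [Fin.ext_iff, Fin.val_last, Fin.coe_ofNat_eq_mod, Nat.zero_mod] at h
      omega
    · exact ⟨_, ⟨fun h => by simp [Fin.ext_iff] at h, hj⟩, by simp⟩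

variable {M : Type*} [CommMonoid M]

theorem prod_boundaries_erase_zero (c : Composition n) (f : ℕ → M) :
    ∏ b ∈ c.boundaries.erase 0, f b = ∏ j ∈ range c.length, f (c.sizeUpTo (j + 1)) := by
  have h0 : (0 : Fin (n + 1)) = c.boundary.toEmbedding 0 := c.boundary_zero.symm
  rw [boundaries, h0, ← map_erase, prod_map, Fin.univ_succ, erase_cons, prod_map,
    ← Fin.prod_univ_eq_prod_range]
  rfl

theorem prod_boundaries_erase_zero_eq_mul (c : Composition n) (hn : 1 ≤ n) (f : ℕ → M) :
    ∏ b ∈ c.boundaries.erase 0, f b =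
      f n * ∏ j ∈ compositionAsSetEquiv n c.toCompositionAsSet, f (j + 1) := by
  have hlast : n ∉ (compositionAsSetEquiv n c.toCompositionAsSet).map
      (Fin.valEmbedding.trans (addRightEmbedding 1)) := by
    simp only [mem_map, Function.Embedding.trans_apply, Fin.valEmbedding_apply,
      addRightEmbedding_apply, not_exists, not_and]
    omega
  calc ∏ b ∈ c.boundaries.erase 0, f b
      = ∏ b ∈ (c.boundaries.erase 0).map Fin.valEmbedding, f b :=
        (prod_map _ Fin.valEmbedding f).symm
    _ = _ := by rw [map_val_boundaries_erase_zero c hn, prod_insert hlast, prod_map]; rfl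

end Composition

theorem pProd_mul_pow_length {n : ℕ} (c : Composition n) (t x : ℂ) :
    pProd c.blocks t * x ^ c.length =
      ∏ j ∈ range c.length, x * (t - c.sizeUpTo (j + 1) + 1) := by
  rw [prod_mul_distrib, prod_const, card_range, mul_comm]
  rfl

/-- Summing `p_{i_1,…,i_k}(t)·x^k` over all compositions `(i_1,…,i_k)` of `i`
(grouping by length `k = 1,…,i`) gives
`(xt+1)(x(t−1)+1)⋯(x(t−i+2)+1)·x(t−i+1)`. -/
theorem stmt1 (i : ℕ) (hi : 1 ≤ i) (t x : ℂ) :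
    ∑ c : Composition i, pProd c.blocks t * x ^ c.length =
      (∏ j ∈ Finset.range (i - 1), (x * (t - (j : ℂ)) + 1)) * (x * (t - (i : ℂ) + 1)) := by
  set g : ℕ → ℂ := fun b => x * (t - b + 1)
  have hterm (c : Composition i) : pProd c.blocks t * x ^ c.length =
      g i * ∏ j ∈ compositionAsSetEquiv i c.toCompositionAsSet, g (j + 1) := by
    rw [pProd_mul_pow_length, ← c.prod_boundaries_erase_zero g,
      c.prod_boundaries_erase_zero_eq_mul hi]
  calc ∑ c : Composition i, pProd c.blocks t * x ^ c.length
      = g i * ∑ s : Finset (Fin (i - 1)), ∏ j ∈ s, g (j + 1) := by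
        simp_rw [hterm, ← mul_sum]
        exact congrArg _ (((compositionEquiv i).trans (compositionAsSetEquiv i)).sum_comp
          fun s => ∏ j ∈ s, g (j + 1))
    _ = g i * ∏ j : Fin (i - 1), (g (j + 1) + 1) := by rw [prod_add_one, powerset_univ]
    _ = _ := by
        rw [Fin.prod_univ_eq_prod_range (fun j => g (j + 1) + 1), mul_comm]
        congr 1
        exact prod_congr rfl fun j _ => by push_cast [g]; ring
end

section
/- For every natural number i ≥ 1, the sum over all compositions (i_1,…,i_k) of i of the product (i−i_1+1)(i−i_1−i_2+1)⋯(i−i_1−⋯−i_k+1) equals (i+1)!/2. -/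
/-!
A composition of `i` is determined by its set `S ⊆ {1, …, i - 1}` of interior partial sums, and
since the factor at the final partial sum `i` is `1`, its product is `∏ s ∈ S, (i - s + 1)`.
Summing over all subsets factors the sum as `∏ s ∈ [1, i - 1], (i - s + 2) = (i + 1)! / 2`.
-/

open Finset

/-- `p_{i_1,…,i_k}(t) = (t−i_1+1)(t−i_1−i_2+1)⋯(t−i+1)`, a product over the
partial sums of the list `l = (i_1,…,i_k)`. -/
noncomputable def pProdQ (l : List ℕ) (t : ℚ) : ℚ :=
  ∏ j ∈ Finset.range l.length, (t - ((l.take (j + 1)).sum : ℚ) + 1)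

variable {M R : Type*} [CommMonoid M] [CommSemiring R] {n : ℕ}

theorem Composition.prod_boundaries (c : Composition n) (f : ℕ → M) :
    ∏ b ∈ c.boundaries, f b = f 0 * ∏ j ∈ range c.length, f (c.sizeUpTo (j + 1)) := by
  rw [boundaries, prod_map, Fin.prod_univ_succ, ← Fin.prod_univ_eq_prod_range]
  simp [boundary]

theorem compositionAsSetEquiv_symm_apply_boundaries (s : Finset (Fin (n - 1))) :
    ((compositionAsSetEquiv n).symm s).boundaries =
      insert 0 (insert (Fin.last n)
        (s.map ((Fin.castLEEmb (Nat.sub_le n 1)).trans (Fin.succEmb n)))) := by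
  ext b
  simp only [compositionAsSetEquiv, Equiv.coe_fn_symm_mk, Set.toFinset_ofPred, mem_filter,
    mem_univ, true_and, mem_insert, mem_map, Function.Embedding.trans_apply, exists_prop]
  refine or_congr_right (or_congr_right (exists_congr fun _ ↦ and_congr_right fun _ ↦ ?_))
  rw [eq_comm, Fin.ext_iff]
  rfl

theorem prod_compositionAsSetEquiv_symm_apply_boundaries (hn : 0 < n) (s : Finset (Fin (n - 1)))
    (f : ℕ → M) :
    ∏ b ∈ ((compositionAsSetEquiv n).symm s).boundaries, f b =
      f 0 * f n * ∏ x ∈ s, f (x + 1) := by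
  rw [compositionAsSetEquiv_symm_apply_boundaries, prod_insert, prod_insert, prod_map, mul_assoc]
  · rfl
  · simp only [mem_map, Function.Embedding.trans_apply, not_exists, not_and, Fin.ext_iff]
    intro x _ h
    simp only [Fin.castLEEmb_apply, Fin.coe_succEmb, Fin.val_succ, Fin.val_castLE,
      Fin.val_last] at h
    omega
  · simpa [Fin.ext_iff] using hn.ne

theorem Composition.sum_prod_boundaries (hn : 0 < n) (f : ℕ → R) :
    ∑ c : Composition n, ∏ b ∈ c.boundaries, f b =
      f 0 * f n * ∏ x ∈ range (n - 1), (f (x + 1) + 1) := by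
  calc ∑ c : Composition n, ∏ b ∈ c.boundaries, f b
      = ∑ s : Finset (Fin (n - 1)), ∏ b ∈ ((compositionAsSetEquiv n).symm s).boundaries, f b :=
        Fintype.sum_equiv ((compositionEquiv n).trans (compositionAsSetEquiv n)) _ _
          fun c ↦ by simp [compositionEquiv]
    _ = f 0 * f n * ∏ x : Fin (n - 1), (f (x + 1) + 1) := by
        simp_rw [prod_compositionAsSetEquiv_symm_apply_boundaries hn, ← mul_sum, prod_add_one,
          powerset_univ]
    _ = _ := by rw [Fin.prod_univ_eq_prod_range (fun x ↦ f (x + 1) + 1)]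

theorem Composition.sum_prod_succ_sub_sizeUpTo (hn : 0 < n) :
    ∑ c : Composition n, ∏ j ∈ range c.length, (n + 1 - c.sizeUpTo (j + 1)) =
      (n + 1).descFactorial (n - 1) := by
  have hsum := sum_prod_boundaries hn (fun b ↦ n + 1 - b)
  simp_rw [prod_boundaries, ← mul_sum, Nat.sub_zero, Nat.add_sub_cancel_left, mul_one] at hsum
  rw [mul_left_cancel₀ (Nat.succ_ne_zero n) hsum, Nat.descFactorial_eq_prod_range]
  exact prod_congr rfl fun x hx ↦ by rw [mem_range] at hx; omega

theorem pProdQ_blocks_eq_natCast_prod (c : Composition n) :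
    pProdQ c.blocks n = ((∏ j ∈ range c.length, (n + 1 - c.sizeUpTo (j + 1)) : ℕ) : ℚ) := by
  rw [pProdQ, Nat.cast_prod]
  refine prod_congr rfl fun j _ ↦ ?_
  rw [Nat.cast_sub ((c.sizeUpTo_le _).trans (Nat.le_succ n)), Nat.cast_add_one,
    Composition.sizeUpTo]
  ring

/-- The sum over all compositions of `i` of
`(i−i_1+1)(i−i_1−i_2+1)⋯1` equals `(i+1)!/2`. -/
theorem stmt2 (i : ℕ) (hi : 1 ≤ i) :
    ∑ c : Composition i, pProdQ c.blocks (i : ℚ) = ((i + 1).factorial : ℚ) / 2 := by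
  have hfact := Nat.factorial_mul_descFactorial (show i - 1 ≤ i + 1 by omega)
  rw [show i + 1 - (i - 1) = 2 by omega] at hfact
  simp_rw [pProdQ_blocks_eq_natCast_prod, ← Nat.cast_sum,
    Composition.sum_prod_succ_sub_sizeUpTo hi, ← hfact]
  push_cast
  ring
end

section
/- Let D and L be the linear operators on polynomials (or formal power series) in z defined by D(z^k) = k z^{k−1} (differentiation) and L(z^{k+1}) = z^k, L(1) = 0 (left translation on coefficients). Then for all i, j ≥ 0, the commutator satisfies [D L^i, D L^j] = (i−j) · D L^{i+j+1}. -/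
open Polynomial

/-- Differentiation `D` as a linear operator on `ℂ[z]`. -/
noncomputable def Dop : Module.End ℂ (Polynomial ℂ) := Polynomial.derivative

/-- The left translation operator `L`, sending `Σ c_k z^k` to `Σ c_{k+1} z^k`. -/
noncomputable def Lop : Module.End ℂ (Polynomial ℂ) where
  toFun := Polynomial.divX
  map_add' p q := Polynomial.divX_add
  map_smul' c p := by
    ext n
    simp [Polynomial.coeff_divX]

lemma coeff_Lop_pow (n : ℕ) (p : Polynomial ℂ) (m : ℕ) :
    ((Lop ^ n) p).coeff m = p.coeff (m + n) := by
  induction n generalizing m with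
  | zero => simp
  | succ k ih =>
    have h : (Lop ^ (k + 1)) p = Lop ((Lop ^ k) p) := by
      rw [pow_succ']; rfl
    rw [h]
    show (Polynomial.divX ((Lop ^ k) p)).coeff m = _
    rw [Polynomial.coeff_divX, ih]
    ring_nf

lemma coeff_DL (n : ℕ) (p : Polynomial ℂ) (m : ℕ) :
    (Dop ((Lop ^ n) p)).coeff m = (m + 1 : ℂ) * p.coeff (m + 1 + n) := by
  rw [Dop]
  simp [Polynomial.coeff_derivative, coeff_Lop_pow]
  ring

/-- `[D L^i, D L^j] = (i−j) · D L^{i+j+1}` (products are compositions of operators,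
`⁅A,B⁆ = AB − BA`). -/
theorem stmt6 (i j : ℕ) :
    ⁅Dop * Lop ^ i, Dop * Lop ^ j⁆ = ((i : ℤ) - (j : ℤ)) • (Dop * Lop ^ (i + j + 1)) := by
  apply LinearMap.ext
  intro p
  apply Polynomial.ext
  intro n
  simp only [Ring.lie_def, LinearMap.sub_apply, Module.End.mul_apply, LinearMap.smul_apply,
    Polynomial.coeff_sub, Polynomial.coeff_smul, coeff_DL]
  have e1 : n + 1 + j + 1 + i = n + 1 + (i + j + 1) := by ring
  have e2 : n + 1 + i + 1 + j = n + 1 + (i + j + 1) := by ring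
  rw [e1, e2, zsmul_eq_mul]
  push_cast
  ring
end

section
/- Let D and L be the operators on ℂ[z] with D(z^m) = m z^{m−1} and L(Σ c_k z^k) = Σ c_{k+1} z^k. Then for every i ≥ 1 and every x ∈ ℂ, the operator identity Σ_{i_1+⋯+i_k=i} x^k · D L^{i_1−1} ⋯ D L^{i_k−1} = x D (L + xD)^{i−1} holds, where the sum runs over compositions of i. -/
open Polynomial Finset

/-! Each composition of `i` contributes one word in `a` and `b` beginning with `b`: the block
`m` is read as `b a^(m-1)`. Splitting off the first block gives a recursion over the first block's
size, and `b (a + b)^(i-1)` obeys the same recursion because of the noncommutative expansion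
`(a + b)^n = a^n + Σ_{j<n} a^j b (a + b)^(n-1-j)`, which sorts the words of `(a + b)^n` by the
position of their first `b`. The theorem is the case `a = L`, `b = x D`. -/

theorem add_pow_eq_pow_add_sum {R : Type*} [Semiring R] (a b : R) (n : ℕ) :
    (a + b) ^ n = a ^ n + ∑ j ∈ range n, a ^ j * b * (a + b) ^ (n - 1 - j) := by
  induction n with
  | zero => simp
  | succ n ih =>
    have hsub : ∀ j ∈ range n, a ^ (j + 1) * b * (a + b) ^ (n - 1 - j)
        = a ^ (j + 1) * b * (a + b) ^ (n + 1 - 1 - (j + 1)) := fun j _ => by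
      congr 2; omega
    calc (a + b) ^ (n + 1) = a * (a + b) ^ n + b * (a + b) ^ n := by rw [pow_succ', add_mul]
      _ = a ^ (n + 1) + ∑ j ∈ range n, a ^ (j + 1) * b * (a + b) ^ (n - 1 - j)
            + b * (a + b) ^ n := by
        rw [ih, mul_add, mul_sum]; simp only [← mul_assoc, ← pow_succ']
      _ = a ^ (n + 1) + ∑ j ∈ range (n + 1), a ^ j * b * (a + b) ^ (n + 1 - 1 - j) := by
        rw [sum_range_succ' _ n, sum_congr rfl hsub]; simp [add_assoc]

namespace Composition

def consBlock (n : ℕ) (p : Σ j : Fin (n + 1), Composition (n - j)) : Composition (n + 1) where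
  blocks := (p.1 + 1) :: p.2.blocks
  blocks_pos := by
    rintro k (_ | ⟨_, hk⟩)
    · omega
    · exact p.2.blocks_pos hk
  blocks_sum := by
    have := p.1.isLt
    simp only [List.sum_cons, p.2.blocks_sum]
    omega

theorem consBlock_bijective (n : ℕ) : Function.Bijective (consBlock n) := by
  constructor
  · rintro ⟨j, c⟩ ⟨j', c'⟩ h
    have hblocks := congrArg Composition.blocks h
    simp only [consBlock, List.cons.injEq, Nat.add_right_cancel_iff] at hblocks
    obtain ⟨hj, hc⟩ := hblocks
    obtain rfl : j = j' := Fin.ext hj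
    obtain rfl : c = c' := Composition.ext hc
    rfl
  · intro c
    obtain ⟨b, t, hbt⟩ := List.exists_cons_of_ne_nil (c.blocks_eq_nil.not.2 n.succ_ne_zero)
    have hb : 1 ≤ b := c.one_le_blocks (by simp [hbt])
    have hsum : b + t.sum = n + 1 := by simpa [hbt] using c.blocks_sum
    refine ⟨⟨⟨b - 1, by omega⟩, ⟨t, fun hk => c.blocks_pos (by simp [hbt, hk]), by simp; omega⟩⟩, ?_⟩
    exact Composition.ext (by simp [consBlock, hbt]; omega)

variable {R : Type*} [Semiring R]

theorem sum_prod_map_blocks_zero (f : ℕ → R) :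
    ∑ c : Composition 0, (c.blocks.map f).prod = 1 := by
  have hc : ∀ c : Composition 0, (c.blocks.map f).prod = 1 := fun c => by
    simp [c.blocks_eq_nil.2 rfl]
  simp [hc, composition_card]

theorem sum_prod_map_blocks_succ (f : ℕ → R) (n : ℕ) :
    ∑ c : Composition (n + 1), (c.blocks.map f).prod
      = ∑ j ∈ range (n + 1), f (j + 1) * ∑ c : Composition (n - j), (c.blocks.map f).prod := by
  rw [← Fintype.sum_bijective _ (consBlock_bijective n) _ _ fun _ => rfl, ← univ_sigma_univ,
    sum_sigma, ← Fin.sum_univ_eq_sum_range]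
  simp [consBlock, mul_sum]

theorem sum_prod_map_blocks_mul_pow (a b : R) (n : ℕ) :
    ∑ c : Composition (n + 1), (c.blocks.map fun m => b * a ^ (m - 1)).prod
      = b * (a + b) ^ n := by
  induction n using Nat.strong_induction_on with
  | _ n ih =>
    have htail : ∀ j ∈ range n, b * a ^ j *
        ∑ c : Composition (n - j), (c.blocks.map fun m => b * a ^ (m - 1)).prod
          = b * (a ^ j * b * (a + b) ^ (n - 1 - j)) := fun j hj => by
      obtain ⟨k, hk⟩ : ∃ k, n - j = k + 1 := ⟨n - 1 - j, by have := mem_range.1 hj; omega⟩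
      rw [hk, ih k (by omega), show k = n - 1 - j by omega]
      simp only [mul_assoc]
    rw [sum_prod_map_blocks_succ, sum_range_succ, Nat.sub_self, sum_prod_map_blocks_zero]
    simp only [Nat.add_sub_cancel]
    rw [sum_congr rfl htail, ← mul_sum, mul_one, ← mul_add, add_comm, ← add_pow_eq_pow_add_sum]

end Composition

/-- `Σ_{i_1+⋯+i_k=i} x^k · D L^{i_1−1} ⋯ D L^{i_k−1} = x D (L + x D)^{i−1}`,
the sum running over compositions of `i`. -/
theorem stmt7 (i : ℕ) (hi : 1 ≤ i) (x : ℂ) :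
    ∑ c : Composition i,
        x ^ c.length • (c.blocks.map (fun m => Dop * Lop ^ (m - 1))).prod =
      (x • Dop) * (Lop + x • Dop) ^ (i - 1) := by
  obtain ⟨n, rfl⟩ := Nat.exists_eq_add_of_le' hi
  have hsmul : ∀ c : Composition (n + 1),
      x ^ c.length • (c.blocks.map (fun m => Dop * Lop ^ (m - 1))).prod
        = (c.blocks.map fun m => x • Dop * Lop ^ (m - 1)).prod := fun c => by
    rw [← c.blocks_length, ← List.length_map (f := fun m => Dop * Lop ^ (m - 1)), List.smul_prod,
      List.map_map]
    simp only [Function.comp_def, smul_mul_assoc]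
  simp only [hsmul, Composition.sum_prod_map_blocks_mul_pow, Nat.add_sub_cancel]
end

section
/- For all integers i > j ≥ 0, the polynomial identity ℬ_{i−j}(t_1,…,t_{i−j}, j+1) = ((j+1)!/(i+1)!) · B_{i+1,j+1}(1, 2!t_1, 3!t_2, …, (i−j+1)! t_{i−j}) holds, where ℬ_k(t_1,…,t_k,t) = Σ_{l_1+2l_2+⋯+k l_k = k} (Π_{l=1−l_1−⋯−l_k}^{0} (t+l)) · t_1^{l_1}⋯t_k^{l_k} / (l_1!⋯l_k!) and B_{r,s} is the partial Bell polynomial. -/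
open Finset

/-- The partial Bell polynomial `B_{r,s}(x_1,…,x_l)`, `l = r−s+1`:
`Σ_{k_1+⋯+k_l=s, k_1+2k_2+⋯+lk_l=r} (r!/(k_1!⋯k_l!)) (x_1/1!)^{k_1}⋯(x_l/l!)^{k_l}`. -/
noncomputable def partialBell (r s : ℕ) (x : ℕ → ℚ) : ℚ :=
  ∑ k ∈ (Fintype.piFinset fun _ : Fin (r - s + 1) => Finset.range (r + 1)) |>.filter
      (fun k => (∑ j, k j) = s ∧ (∑ j, (j.1 + 1) * k j) = r),
    ((r.factorial : ℚ) / ∏ j, ((k j).factorial : ℚ)) *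
      ∏ j, (x (j.1 + 1) / ((j.1 + 1).factorial : ℚ)) ^ k j

/-- `ℬ_k(x_1,…,x_k,t) = Σ_{l_1+2l_2+⋯+kl_k=k} (t(t−1)⋯(t−(l_1+⋯+l_k)+1)) ·
x_1^{l_1}⋯x_k^{l_k}/(l_1!⋯l_k!)`; `ℬ_0 = 1`. -/
noncomputable def calB (k : ℕ) (x : ℕ → ℚ) (t : ℚ) : ℚ :=
  ∑ l ∈ (Fintype.piFinset fun _ : Fin k => Finset.range (k + 1)) |>.filter
      (fun l => (∑ j, (j.1 + 1) * l j) = k),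
    (∏ m ∈ Finset.range (∑ j, l j), (t - (m : ℚ))) *
      ∏ j, x (j.1 + 1) ^ l j / ((l j).factorial : ℚ)

/-!
With `n = j + 1` and `k = i − j`, the falling factorial `n(n−1)⋯(n−s+1)`, `s = l_1 + ⋯ + l_k`,
equals `n!/(n−s)!` and vanishes for `s > n`. Prepending `k_1 = n − s` to the surviving exponent
vectors `(l_1,…,l_k)` is a bijection onto the index vectors of `B_{n+k,n}`, under which `1/(n−s)!`
becomes the missing `1/k_1!`; the factorials `(m+1)!` in the arguments cancel the `1/(m+1)!` of
the Bell polynomial, and `x_0 = 1` makes the extra factor `x_0^{k_1}` trivial.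
-/

def calBExponents (k : ℕ) : Finset (Fin k → ℕ) :=
  (Fintype.piFinset fun _ : Fin k => range (k + 1)).filter fun l => ∑ j, (j.1 + 1) * l j = k

def partialBellExponents (n r s : ℕ) : Finset (Fin n → ℕ) :=
  (Fintype.piFinset fun _ : Fin n => range (r + 1)).filter
    fun c => ∑ j, c j = s ∧ ∑ j, (j.1 + 1) * c j = r

lemma le_of_sum_succ_mul_eq {n r : ℕ} {c : Fin n → ℕ} (h : ∑ j, (j.1 + 1) * c j = r)
    (j : Fin n) : c j ≤ r :=
  h ▸ (Nat.le_mul_of_pos_left _ j.1.succ_pos).trans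
    (single_le_sum (f := fun j : Fin n => (j.1 + 1) * c j) (fun _ _ => Nat.zero_le _) (mem_univ j))

lemma mem_calBExponents {k : ℕ} {l : Fin k → ℕ} :
    l ∈ calBExponents k ↔ ∑ j, (j.1 + 1) * l j = k := by
  simp only [calBExponents, mem_filter, Fintype.mem_piFinset, mem_range, and_iff_right_iff_imp]
  exact fun h j => Nat.lt_succ_of_le (le_of_sum_succ_mul_eq h j)

lemma mem_partialBellExponents {n r s : ℕ} {c : Fin n → ℕ} :
    c ∈ partialBellExponents n r s ↔ ∑ j, c j = s ∧ ∑ j, (j.1 + 1) * c j = r := by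
  simp only [partialBellExponents, mem_filter, Fintype.mem_piFinset, mem_range,
    and_iff_right_iff_imp]
  exact fun h j => Nat.lt_succ_of_le (le_of_sum_succ_mul_eq h.2 j)

lemma calB_eq_sum (k : ℕ) (x : ℕ → ℚ) (t : ℚ) :
    calB k x t = ∑ l ∈ calBExponents k,
      (∏ m ∈ range (∑ j, l j), (t - m)) * ∏ j, x (j.1 + 1) ^ l j / ((l j).factorial : ℚ) :=
  rfl

lemma partialBell_eq_sum {r s n : ℕ} (h : r - s + 1 = n) (x : ℕ → ℚ) :
    partialBell r s x = ∑ c ∈ partialBellExponents n r s,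
      ((r.factorial : ℚ) / ∏ j, ((c j).factorial : ℚ)) *
        ∏ j, (x (j.1 + 1) / ((j.1 + 1).factorial : ℚ)) ^ c j := by
  subst h; rfl

lemma prod_range_natCast_sub_eq_descFactorial {R : Type*} [CommRing R] (n s : ℕ) :
    ∏ m ∈ range s, ((n : R) - m) = n.descFactorial s := by
  rw [← descPochhammer_eval_eq_prod_range, descPochhammer_eval_eq_descFactorial]

lemma sum_succ_mul_cons {k : ℕ} (a : ℕ) (l : Fin k → ℕ) :
    ∑ j : Fin (k + 1), (j.1 + 1) * (Fin.cons a l : Fin (k + 1) → ℕ) j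
      = a + ∑ j, (j.1 + 1) * l j + ∑ j, l j := by
  simp only [Fin.sum_univ_succ, Fin.cons_zero, Fin.cons_succ, Fin.val_zero, Fin.val_succ,
    add_mul, sum_add_distrib, one_mul]
  ring

lemma cons_mem_partialBellExponents {n k : ℕ} {l : Fin k → ℕ} (hl : l ∈ calBExponents k)
    (hn : ∑ j, l j ≤ n) :
    (Fin.cons (n - ∑ j, l j) l : Fin (k + 1) → ℕ) ∈ partialBellExponents (k + 1) (n + k) n := by
  rw [mem_calBExponents] at hl
  rw [mem_partialBellExponents, Fin.sum_univ_succ, sum_succ_mul_cons]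
  simp only [Fin.cons_zero, Fin.cons_succ]
  omega

lemma tail_mem_calBExponents {n k : ℕ} {c : Fin (k + 1) → ℕ}
    (hc : c ∈ partialBellExponents (k + 1) (n + k) n) :
    Fin.tail c ∈ calBExponents k ∧ ∑ j, Fin.tail c j ≤ n := by
  rw [← Fin.cons_self_tail c, mem_partialBellExponents, Fin.sum_univ_succ,
    sum_succ_mul_cons] at hc
  simp only [Fin.cons_zero, Fin.cons_succ] at hc
  rw [mem_calBExponents]
  omega

lemma descFactorial_mul_prod_div_factorial {n k : ℕ} (x : ℕ → ℚ) (hx : x 0 = 1)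
    (l : Fin k → ℕ) (hn : ∑ j, l j ≤ n) :
    (n.descFactorial (∑ j, l j) : ℚ) * ∏ j, x (j.1 + 1) ^ l j / ((l j).factorial : ℚ)
      = (n.factorial : ℚ) / ((n + k).factorial : ℚ) *
        ((((n + k).factorial : ℚ) /
            ∏ j, (((Fin.cons (n - ∑ j, l j) l : Fin (k + 1) → ℕ) j).factorial : ℚ)) *
          ∏ j : Fin (k + 1), ((j.1 + 1).factorial * x (j.1 + 1 - 1) / ((j.1 + 1).factorial : ℚ))
            ^ (Fin.cons (n - ∑ j, l j) l : Fin (k + 1) → ℕ) j) := by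
  have hfact : ((n - ∑ j, l j).factorial : ℚ) * n.descFactorial (∑ j, l j) = n.factorial := by
    exact_mod_cast Nat.factorial_mul_descFactorial hn
  have hpow : ∏ j : Fin (k + 1),
      ((j.1 + 1).factorial * x (j.1 + 1 - 1) / ((j.1 + 1).factorial : ℚ))
        ^ (Fin.cons (n - ∑ j, l j) l : Fin (k + 1) → ℕ) j = ∏ j, x (j.1 + 1) ^ l j := by
    simp [Fin.prod_univ_succ, hx, mul_div_cancel_left₀, Nat.factorial_ne_zero]
  have hden : ∏ j, (((Fin.cons (n - ∑ j, l j) l : Fin (k + 1) → ℕ) j).factorial : ℚ)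
      = (n - ∑ j, l j).factorial * ∏ j, ((l j).factorial : ℚ) := by
    simp [Fin.prod_univ_succ]
  rw [hpow, hden, ← hfact, prod_div_distrib]
  field_simp

theorem calB_natCast_eq_partialBell (n k : ℕ) (x : ℕ → ℚ) (hx : x 0 = 1) :
    calB k x n = (n.factorial : ℚ) / ((n + k).factorial : ℚ) *
      partialBell (n + k) n (fun m => (m.factorial : ℚ) * x (m - 1)) := by
  have hsupport : ∀ l ∈ calBExponents k,
      (∏ m ∈ range (∑ j, l j), ((n : ℚ) - m)) * ∏ j, x (j.1 + 1) ^ l j / ((l j).factorial : ℚ)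
        ≠ 0 → ∑ j, l j ≤ n := by
    intro l _ hl
    contrapose! hl
    rw [prod_range_natCast_sub_eq_descFactorial, Nat.descFactorial_eq_zero_iff_lt.mpr hl,
      Nat.cast_zero, zero_mul]
  rw [calB_eq_sum, ← sum_filter_of_ne hsupport, partialBell_eq_sum (n := k + 1) (by omega),
    mul_sum]
  refine sum_nbij' (fun l => Fin.cons (n - ∑ j, l j) l) Fin.tail ?_ ?_ ?_ ?_ ?_
  · intro l hl
    rw [mem_filter] at hl
    exact cons_mem_partialBellExponents hl.1 hl.2
  · intro c hc
    rw [mem_filter]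
    exact tail_mem_calBExponents hc
  · intro l _
    exact Fin.tail_cons _ _
  · intro c hc
    obtain ⟨hsum, _⟩ := mem_partialBellExponents.mp hc
    rw [← Fin.cons_self_tail c, Fin.sum_univ_succ] at hsum
    simp only [Fin.cons_zero, Fin.cons_succ] at hsum
    conv_rhs => rw [← Fin.cons_self_tail c]
    congr 1
    omega
  · intro l hl
    rw [prod_range_natCast_sub_eq_descFactorial]
    exact descFactorial_mul_prod_div_factorial x hx l (mem_filter.mp hl).2

/-- For `i > j ≥ 0`:
`ℬ_{i−j}(x_1,…,x_{i−j}, j+1) = ((j+1)!/(i+1)!) · B_{i+1,j+1}(1, 2!x_1, …, (i−j+1)! x_{i−j})`,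
where `x 0 = 1` encodes the value `t_0 = 1`. -/
theorem stmt9 (i j : ℕ) (hij : j < i) (x : ℕ → ℚ) (hx : x 0 = 1) :
    calB (i - j) x ((j : ℚ) + 1) =
      (((j + 1).factorial : ℚ) / ((i + 1).factorial : ℚ)) *
        partialBell (i + 1) (j + 1) (fun m => (m.factorial : ℚ) * x (m - 1)) := by
  obtain ⟨k, rfl⟩ := Nat.exists_eq_add_of_lt hij
  have h := calB_natCast_eq_partialBell (j + 1) (k + 1) x hx
  rw [show j + 1 + (k + 1) = j + k + 1 + 1 by ring] at h
  rw [show j + k + 1 - j = k + 1 by omega]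
  exact_mod_cast h
end

section
/- For every k ≥ 1 the polynomial identity ℬ_k(t_1,…,t_k, t) = Σ_{j=1}^{k} ((t+1)j/k − 1) · t_j · ℬ_{k−j}(t_1,…,t_{k−j}, t) holds, with ℬ_0 = 1. -/
open Finset

namespace calB

variable {n : ℕ}

def weight (l : Fin n → ℕ) : ℕ := ∑ j, (j.1 + 1) * l j

def vectors (n w : ℕ) : Finset (Fin n → ℕ) :=
  (Fintype.piFinset fun _ : Fin n => range (n + 1)).filter (fun l => weight l = w)

def monomialDivFactorial (x : ℕ → ℚ) (l : Fin n → ℕ) : ℚ :=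
  ∏ j, x (j.1 + 1) ^ l j / ((l j).factorial : ℚ)

noncomputable def term (x : ℕ → ℚ) (t : ℚ) (l : Fin n → ℕ) : ℚ :=
  (descPochhammer ℚ (∑ j, l j)).eval t * monomialDivFactorial x l

lemma mul_apply_le_weight (l : Fin n → ℕ) (i : Fin n) : (i.1 + 1) * l i ≤ weight l :=
  single_le_sum (f := fun j : Fin n => (j.1 + 1) * l j) (fun _ _ => Nat.zero_le _) (mem_univ i)

lemma apply_le_weight (l : Fin n → ℕ) (i : Fin n) : l i ≤ weight l :=
  (Nat.le_mul_of_pos_left _ i.1.succ_pos).trans (mul_apply_le_weight l i)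

lemma apply_eq_zero_of_weight_le {l : Fin n → ℕ} {i : Fin n} (hi : weight l ≤ i) : l i = 0 := by
  have := mul_apply_le_weight l i
  by_contra h
  have : i.1 + 1 ≤ (i.1 + 1) * l i := Nat.le_mul_of_pos_right _ (Nat.pos_of_ne_zero h)
  omega

lemma weight_add (l l' : Fin n → ℕ) : weight (l + l') = weight l + weight l' := by
  simp only [weight, Pi.add_apply, mul_add, sum_add_distrib]

lemma weight_single (i : Fin n) (c : ℕ) : weight (Pi.single i c) = (i.1 + 1) * c := by
  simp [weight, Pi.single_apply]

lemma mem_vectors {w : ℕ} (h : w ≤ n) {l : Fin n → ℕ} : l ∈ vectors n w ↔ weight l = w := by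
  simp only [vectors, mem_filter, Fintype.mem_piFinset, mem_range, and_iff_right_iff_imp]
  exact fun hl i => by have := apply_le_weight l i; omega

lemma eq_sum_term (k : ℕ) (x : ℕ → ℚ) (t : ℚ) :
    calB k x t = ∑ l ∈ vectors k k, term x t l := by
  simp only [calB, vectors, weight, term, monomialDivFactorial, descPochhammer_eval_eq_prod_range]
  rfl

lemma weight_append_zero {w : ℕ} (m : ℕ) (l : Fin w → ℕ) :
    weight (Fin.append l (0 : Fin m → ℕ)) = weight l := by
  simp [weight, Fin.sum_univ_add]

lemma term_append_zero {w : ℕ} (m : ℕ) (x : ℕ → ℚ) (t : ℚ) (l : Fin w → ℕ) :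
    term x t (Fin.append l (0 : Fin m → ℕ)) = term x t l := by
  simp [term, monomialDivFactorial, Fin.sum_univ_add, Fin.prod_univ_add]

lemma append_castAdd_zero {w m : ℕ} {l : Fin (w + m) → ℕ} (hl : weight l ≤ w) :
    Fin.append (fun i => l (Fin.castAdd m i)) (0 : Fin m → ℕ) = l := by
  conv_rhs => rw [← Fin.append_castAdd_natAdd (f := l)]
  congr 1
  funext i
  exact (apply_eq_zero_of_weight_le (by rw [Fin.val_natAdd]; omega)).symm

lemma eq_sum_term_add (w m : ℕ) (x : ℕ → ℚ) (t : ℚ) :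
    calB w x t = ∑ l ∈ vectors (w + m) w, term x t l := by
  rw [eq_sum_term]
  refine sum_nbij' (fun l => Fin.append l 0) (fun l i => l (Fin.castAdd m i)) ?_ ?_ ?_ ?_ ?_
  · intro l hl
    rw [mem_vectors le_self_add, weight_append_zero]
    exact (mem_vectors le_rfl).1 hl
  · intro l hl
    rw [mem_vectors le_self_add] at hl
    rw [mem_vectors le_rfl, ← weight_append_zero m, append_castAdd_zero hl.le, hl]
  · intro l _
    simp
  · intro l hl
    exact append_castAdd_zero ((mem_vectors le_self_add).1 hl).le
  · intro l _
    exact (term_append_zero m x t l).symm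

lemma eq_sum_term_of_le {w : ℕ} (h : w ≤ n) (x : ℕ → ℚ) (t : ℚ) :
    calB w x t = ∑ l ∈ vectors n w, term x t l := by
  obtain ⟨m, rfl⟩ := Nat.exists_eq_add_of_le h
  exact eq_sum_term_add w m x t

lemma sum_add_single (l : Fin n → ℕ) (i : Fin n) :
    ∑ j, (l + Pi.single i 1 : Fin n → ℕ) j = ∑ j, l j + 1 := by
  simp [sum_add_distrib]

lemma sub_single_add_single {l : Fin n → ℕ} {i : Fin n} (hi : 0 < l i) :
    l - Pi.single i 1 + Pi.single i 1 = l := by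
  funext j
  rcases eq_or_ne j i with rfl | hj
  · simp only [Pi.add_apply, Pi.sub_apply, Pi.single_eq_same]
    omega
  · simp [hj]

lemma monomialDivFactorial_add_single (x : ℕ → ℚ) (l : Fin n → ℕ) (i : Fin n) :
    ((l i : ℚ) + 1) * monomialDivFactorial x (l + Pi.single i 1) =
      x (i.1 + 1) * monomialDivFactorial x l := by
  have hrest : ∏ j ∈ {i}ᶜ, x (j.1 + 1) ^ (l + Pi.single i 1 : Fin n → ℕ) j /
      (((l + Pi.single i 1 : Fin n → ℕ) j).factorial : ℚ) =
      ∏ j ∈ {i}ᶜ, x (j.1 + 1) ^ l j / ((l j).factorial : ℚ) :=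
    prod_congr rfl fun j hj => by simp [(by simpa using hj : j ≠ i)]
  simp only [monomialDivFactorial]
  rw [Fintype.prod_eq_mul_prod_compl i, Fintype.prod_eq_mul_prod_compl i, hrest]
  simp only [Pi.add_apply, Pi.single_eq_same, Nat.factorial_succ, pow_succ]
  push_cast
  field_simp

lemma mul_calB_sub_eq_sum (i : Fin n) (x : ℕ → ℚ) (t : ℚ) :
    x (i.1 + 1) * calB (n - (i.1 + 1)) x t =
      ∑ l ∈ vectors n n,
        (l i : ℚ) * ((descPochhammer ℚ (∑ j, l j - 1)).eval t * monomialDivFactorial x l) := by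
  rw [eq_sum_term_of_le (Nat.sub_le _ _), mul_sum,
    ← sum_filter_of_ne (s := vectors n n) (p := fun l => 0 < l i)]
  -- the factor `l i` vanishes off the image of `l ↦ l + Pi.single i 1`
  · refine sum_nbij' (· + Pi.single i 1) (· - Pi.single i 1) ?_ ?_ ?_ ?_ ?_
    · intro l hl
      rw [mem_vectors (Nat.sub_le _ _)] at hl
      have := mul_apply_le_weight l i
      simp only [mem_filter, mem_vectors le_rfl, weight_add, weight_single, hl, Pi.add_apply,
        Pi.single_eq_same]
      omega
    · intro l hl
      rw [mem_filter, mem_vectors le_rfl] at hl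
      rw [mem_vectors (Nat.sub_le _ _)]
      have h := congrArg weight (sub_single_add_single hl.2)
      rw [weight_add, weight_single, hl.1] at h
      omega
    · intro l _
      exact add_tsub_cancel_right l _
    · intro l hl
      exact sub_single_add_single (mem_filter.1 hl).2
    · intro l _
      rw [term, sum_add_single, Nat.add_sub_cancel, mul_left_comm,
        ← monomialDivFactorial_add_single]
      simp only [Pi.add_apply, Pi.single_eq_same]
      push_cast
      ring
  · intro l _ h
    exact Nat.pos_of_ne_zero fun h0 => h (by rw [h0, Nat.cast_zero, zero_mul])

lemma sum_ne_zero_of_weight_ne_zero {l : Fin n → ℕ} (hl : weight l ≠ 0) : ∑ j, l j ≠ 0 := by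
  contrapose! hl
  simp [weight, sum_eq_zero_iff.1 hl]

lemma sum_mul_apply_eq (t : ℚ) {k : ℕ} (hk : k ≠ 0) {l : Fin n → ℕ} (hl : weight l = k) :
    ∑ i, ((t + 1) * ((i.1 + 1 : ℕ) : ℚ) / k - 1) * l i = t + 1 - ∑ i, (l i : ℚ) := by
  have hw : ∑ i, ((i.1 + 1 : ℕ) : ℚ) * l i = k := by exact_mod_cast hl
  calc ∑ i, ((t + 1) * ((i.1 + 1 : ℕ) : ℚ) / k - 1) * l i
      = (t + 1) / k * ∑ i, ((i.1 + 1 : ℕ) : ℚ) * l i - ∑ i, (l i : ℚ) := by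
        rw [mul_sum, ← sum_sub_distrib]
        exact sum_congr rfl fun i _ => by ring
    _ = t + 1 - ∑ i, (l i : ℚ) := by
        rw [hw]
        field_simp

lemma term_eq_sum (x : ℕ → ℚ) (t : ℚ) {k : ℕ} (hk : k ≠ 0) {l : Fin n → ℕ} (hl : weight l = k) :
    term x t l = ∑ i, ((t + 1) * ((i.1 + 1 : ℕ) : ℚ) / k - 1) *
      ((l i : ℚ) * ((descPochhammer ℚ (∑ j, l j - 1)).eval t * monomialDivFactorial x l)) := by
  obtain ⟨m, hm⟩ := Nat.exists_eq_add_one_of_ne_zero (sum_ne_zero_of_weight_ne_zero (hl ▸ hk))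
  have hm' : ∑ j, (l j : ℚ) = m + 1 := by exact_mod_cast hm
  simp only [← mul_assoc]
  rw [← sum_mul, ← sum_mul, sum_mul_apply_eq t hk hl, hm', term, hm, Nat.add_sub_cancel,
    descPochhammer_succ_eval]
  ring

end calB

lemma Finset.sum_Icc_one_eq_sum_fin {M : Type*} [AddCommMonoid M] (k : ℕ) (f : ℕ → M) :
    ∑ j ∈ Icc 1 k, f j = ∑ i : Fin k, f (i.1 + 1) := by
  rw [Fin.sum_univ_eq_sum_range (fun i => f (i + 1)), range_eq_Ico, sum_Ico_add', zero_add,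
    Ico_add_one_right_eq_Icc]

/-- For `k ≥ 1`:
`ℬ_k(x_1,…,x_k,t) = Σ_{j=1}^{k} ((t+1)j/k − 1)·x_j·ℬ_{k−j}(x_1,…,x_{k−j},t)`. -/
theorem stmt11 (k : ℕ) (hk : 1 ≤ k) (x : ℕ → ℚ) (t : ℚ) :
    calB k x t =
      ∑ j ∈ Finset.Icc 1 k, ((t + 1) * (j : ℚ) / (k : ℚ) - 1) * x j * calB (k - j) x t := by
  rw [sum_Icc_one_eq_sum_fin, calB.eq_sum_term]
  simp_rw [mul_assoc, calB.mul_calB_sub_eq_sum, mul_sum]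
  rw [sum_comm]
  exact sum_congr rfl fun l hl =>
    calB.term_eq_sum x t (by omega) ((calB.mem_vectors le_rfl).1 hl)
end

section
/- For all n > m ≥ 1, the partial Bell polynomials satisfy the recurrence x_1 · (n−m) · B_{n,m}(x_1,…,x_{n−m+1}) = Σ_{j=1}^{n−m} C(n, j) · (m+1 − (n+1)/(j+1)) · x_{j+1} · B_{n−j,m}(x_1,…,x_{n−j−m+1}), as an identity of polynomials with rational coefficients. -/
/-!
The left-hand side is minus the `j = 0` summand of the right-hand side, so the claim is that the
sum over `0 ≤ j ≤ n - m` vanishes. Write each `B_{n-j,m}` as a sum over multiplicity vectors of a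
common length `n - m + 1`. Multiplying a monomial by `x_{j+1}` raises its `j`-th multiplicity, so
the `j`-th summand lands on the multiplicity vectors `l` of `B_{n+1,m+1}` and contributes
`n! ((m+1)(j+1) - (n+1)) lⱼ` to the coefficient of `l`. These cancel because `∑ lⱼ = m + 1` and
`∑ (j+1) lⱼ = n + 1`.
-/

open Finset

open scoped Nat

def multiplicities (M s r : ℕ) : Finset (Fin M → ℕ) :=
  (Fintype.piFinset fun _ : Fin M => range (r + 1)).filter
    (fun k => (∑ i, k i) = s ∧ (∑ i, (i.1 + 1) * k i) = r)

noncomputable def bellMonomial {M : ℕ} (x : ℕ → ℚ) (k : Fin M → ℕ) : ℚ :=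
  ∏ i, (x (i.1 + 1) / (i.1 + 1)! : ℚ) ^ k i / (k i)!

theorem partialBell_eq_sum_s13 (r s : ℕ) (x : ℕ → ℚ) :
    partialBell r s x = r ! * ∑ k ∈ multiplicities (r - s + 1) s r, bellMonomial x k := by
  rw [partialBell, mul_sum]
  refine sum_congr rfl fun k _ => ?_
  rw [bellMonomial, prod_div_distrib]
  ring

theorem mem_multiplicities {M s r : ℕ} {k : Fin M → ℕ} :
    k ∈ multiplicities M s r ↔ ∑ i, k i = s ∧ ∑ i, (i.1 + 1) * k i = r := by
  rw [multiplicities, mem_filter, Fintype.mem_piFinset, and_iff_right_iff_imp]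
  rintro ⟨-, hr⟩ i
  rw [mem_range, Nat.lt_succ_iff, ← hr]
  calc k i ≤ (i.1 + 1) * k i := Nat.le_mul_of_pos_left _ i.1.succ_pos
    _ ≤ ∑ i, (i.1 + 1) * k i :=
      single_le_sum (f := fun i : Fin M => (i.1 + 1) * k i) (fun _ _ => Nat.zero_le _) (mem_univ i)

theorem apply_eq_zero_of_mem_multiplicities {M s r : ℕ} {k : Fin M → ℕ}
    (hk : k ∈ multiplicities M s r) {i : Fin M} (hi : r - s < i) : k i = 0 := by
  obtain ⟨hs, hr⟩ := mem_multiplicities.1 hk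
  have hweight : ∑ i, (i.1 + 1) * k i = ∑ i, i.1 * k i + ∑ i, k i := by
    rw [← sum_add_distrib]
    exact sum_congr rfl fun i _ => by ring
  by_contra h
  have : i.1 ≤ ∑ i, i.1 * k i :=
    (Nat.le_mul_of_pos_right _ (Nat.pos_of_ne_zero h)).trans
      (single_le_sum (f := fun i : Fin M => i.1 * k i) (fun _ _ => Nat.zero_le _) (mem_univ i))
  omega

theorem snoc_zero_mem_multiplicities_iff {M s r : ℕ} {k : Fin M → ℕ} :
    (Fin.snoc k 0 : Fin (M + 1) → ℕ) ∈ multiplicities (M + 1) s r ↔ k ∈ multiplicities M s r := by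
  simp [mem_multiplicities, Fin.sum_univ_castSucc]

theorem sum_multiplicities_succ {α : Type*} [AddCommMonoid α] {M s r : ℕ} (hM : r - s + 1 ≤ M)
    (F : (Fin (M + 1) → ℕ) → α) :
    ∑ l ∈ multiplicities (M + 1) s r, F l = ∑ k ∈ multiplicities M s r, F (Fin.snoc k 0) := by
  have hinit : ∀ l ∈ multiplicities (M + 1) s r, Fin.snoc (Fin.init l) 0 = l := fun l hl => by
    conv_rhs => rw [← Fin.snoc_init_self l]
    rw [apply_eq_zero_of_mem_multiplicities hl (by rw [Fin.val_last]; omega)]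
  refine (sum_nbij' (fun k => Fin.snoc k 0) Fin.init (fun k hk => ?_) (fun l hl => ?_)
    (fun k _ => Fin.init_snoc _ _) hinit (fun _ _ => rfl)).symm
  · exact snoc_zero_mem_multiplicities_iff.2 hk
  · rw [← hinit l hl, snoc_zero_mem_multiplicities_iff] at hl
    exact hl

theorem bellMonomial_snoc_zero {M : ℕ} (x : ℕ → ℚ) (k : Fin M → ℕ) :
    bellMonomial x (Fin.snoc k 0 : Fin (M + 1) → ℕ) = bellMonomial x k := by
  simp [bellMonomial, Fin.prod_univ_castSucc]

theorem partialBell_eq_sum_of_le {r s M : ℕ} (hM : r - s + 1 ≤ M) (x : ℕ → ℚ) :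
    partialBell r s x = r ! * ∑ k ∈ multiplicities M s r, bellMonomial x k := by
  induction M, hM using Nat.le_induction with
  | base => exact partialBell_eq_sum_s13 r s x
  | succ M hM ih => simp only [ih, sum_multiplicities_succ hM, bellMonomial_snoc_zero]

theorem add_single_mem_multiplicities_iff {M s r : ℕ} {k : Fin M → ℕ} (j : Fin M) :
    k + Pi.single j 1 ∈ multiplicities M (s + 1) (r + j + 1) ↔ k ∈ multiplicities M s r := by
  simp [mem_multiplicities, sum_add_distrib, mul_add, Pi.single_apply]
  omega

theorem bellMonomial_add_single {M : ℕ} (x : ℕ → ℚ) (k : Fin M → ℕ) (j : Fin M) :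
    (k j + 1) * bellMonomial x (k + Pi.single j 1) = x (j + 1) / (j + 1)! * bellMonomial x k := by
  have hcompl : ∀ i ∈ ({j}ᶜ : Finset (Fin M)), (k + Pi.single j 1 : Fin M → ℕ) i = k i :=
    fun i hi => by rw [Pi.add_apply, Pi.single_eq_of_ne (by simpa using hi), add_zero]
  rw [bellMonomial, bellMonomial, Fintype.prod_eq_mul_prod_compl j,
    Fintype.prod_eq_mul_prod_compl j, prod_congr rfl fun i hi => by rw [hcompl i hi]]
  simp only [Pi.add_apply, Pi.single_eq_same, Nat.factorial_succ, pow_succ]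
  push_cast
  field_simp

theorem mul_sum_bellMonomial {M : ℕ} (x : ℕ → ℚ) (s r : ℕ) (j : Fin M) :
    x (j + 1) / (j + 1)! * ∑ k ∈ multiplicities M s r, bellMonomial x k =
      ∑ l ∈ multiplicities M (s + 1) (r + j + 1), (l j : ℚ) * bellMonomial x l := by
  simp_rw [mul_sum, ← bellMonomial_add_single]
  refine sum_bij_ne_zero (fun k _ _ => k + Pi.single j 1)
    (fun k hk _ => (add_single_mem_multiplicities_iff j).2 hk)
    (fun _ _ _ _ _ _ h => add_right_cancel h) (fun l hl hne => ?_) (fun k _ _ => by simp)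
  have hlj : 1 ≤ l j := Nat.one_le_iff_ne_zero.2 (by simpa using left_ne_zero_of_mul hne)
  obtain ⟨k, rfl⟩ : ∃ k : Fin M → ℕ, k + Pi.single j 1 = l := ⟨l - Pi.single j 1, funext fun i => by
    rcases eq_or_ne i j with rfl | h
    · simpa using Nat.sub_add_cancel hlj
    · simp [Pi.single_eq_of_ne h]⟩
  exact ⟨k, (add_single_mem_multiplicities_iff j).1 hl, by simpa using hne, rfl⟩

theorem mul_partialBell {r s N : ℕ} (hN : r - s + 1 ≤ N) (x : ℕ → ℚ) (j : Fin N) :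
    x (j + 1) * partialBell r s x =
      (j + 1)! * r ! * ∑ l ∈ multiplicities N (s + 1) (r + j + 1), (l j : ℚ) * bellMonomial x l := by
  rw [partialBell_eq_sum_of_le hN, ← mul_sum_bellMonomial]
  field_simp

theorem sum_range_mul_partialBell (n m : ℕ) (c x : ℕ → ℚ) :
    ∑ j ∈ range (n - m + 1), c j * x (j + 1) * partialBell (n - j) m x =
      ∑ l ∈ multiplicities (n - m + 1) (m + 1) (n + 1),
        (∑ j : Fin (n - m + 1), c j * (j.1 + 1)! * (n - j)! * l j) * bellMonomial x l := by
  have hterm (j : Fin (n - m + 1)) : c j * x (j + 1) * partialBell (n - j) m x =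
      ∑ l ∈ multiplicities (n - m + 1) (m + 1) (n + 1),
        c j * (j.1 + 1)! * (n - j)! * l j * bellMonomial x l := by
    have hj : n - j + j + 1 = n + 1 := by omega
    rw [mul_assoc, mul_partialBell (by omega), hj, mul_sum, mul_sum]
    exact sum_congr rfl fun l _ => by ring
  rw [← Fin.sum_univ_eq_sum_range (fun j => c j * x (j + 1) * partialBell (n - j) m x)]
  simp_rw [hterm, sum_mul]
  exact sum_comm

theorem sum_weighted_apply_eq_zero {N m n : ℕ} {l : Fin N → ℕ}
    (hl : l ∈ multiplicities N (m + 1) (n + 1)) :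
    ∑ j : Fin N, (((m : ℚ) + 1) * (j + 1) - (n + 1)) * l j = 0 := by
  obtain ⟨hs, hr⟩ := mem_multiplicities.1 hl
  have hs' : ∑ j, (l j : ℚ) = m + 1 := by exact_mod_cast hs
  have hr' : ∑ j : Fin N, ((j : ℚ) + 1) * l j = n + 1 := by exact_mod_cast hr
  simp_rw [sub_mul, sum_sub_distrib, mul_assoc, ← mul_sum, hs', hr']
  ring

theorem sum_range_choose_mul_partialBell_eq_zero (n m : ℕ) (x : ℕ → ℚ) :
    ∑ j ∈ range (n - m + 1), (n.choose j : ℚ) * ((m : ℚ) + 1 - ((n : ℚ) + 1) / ((j : ℚ) + 1)) *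
      x (j + 1) * partialBell (n - j) m x = 0 := by
  rw [sum_range_mul_partialBell]
  refine sum_eq_zero fun l hl => ?_
  have hcoeff (j : Fin (n - m + 1)) :
      (n.choose j : ℚ) * ((m : ℚ) + 1 - ((n : ℚ) + 1) / ((j : ℚ) + 1)) * (j.1 + 1)! * (n - j)! =
        n ! * (((m : ℚ) + 1) * (j + 1) - (n + 1)) := by
    rw [Nat.cast_choose ℚ (by omega : j.1 ≤ n), Nat.factorial_succ]
    push_cast
    field_simp
  simp_rw [hcoeff, mul_assoc, ← mul_sum, sum_weighted_apply_eq_zero hl, mul_zero, zero_mul]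

theorem stmt13_general (n m : ℕ) (x : ℕ → ℚ) :
    x 1 * ((n : ℚ) - (m : ℚ)) * partialBell n m x =
      ∑ j ∈ Finset.Icc 1 (n - m),
        (n.choose j : ℚ) * ((m : ℚ) + 1 - ((n : ℚ) + 1) / ((j : ℚ) + 1)) * x (j + 1) *
          partialBell (n - j) m x := by
  have hrange : range (n - m + 1) = insert 0 (Icc 1 (n - m)) := by
    ext j
    simp only [mem_range, mem_insert, mem_Icc]
    omega
  have h := sum_range_choose_mul_partialBell_eq_zero n m x
  rw [hrange, sum_insert (by simp)] at h
  norm_num at h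
  linarith

/-- For `n > m ≥ 1`:
`x_1·(n−m)·B_{n,m}(x_1,…,x_{n−m+1})
  = Σ_{j=1}^{n−m} C(n,j)·(m+1−(n+1)/(j+1))·x_{j+1}·B_{n−j,m}(x_1,…,x_{n−j−m+1})`. -/
theorem stmt13 (n m : ℕ) (hm : 1 ≤ m) (hmn : m < n) (x : ℕ → ℚ) :
    x 1 * ((n : ℚ) - (m : ℚ)) * partialBell n m x =
      ∑ j ∈ Finset.Icc 1 (n - m),
        (n.choose j : ℚ) * ((m : ℚ) + 1 - ((n : ℚ) + 1) / ((j : ℚ) + 1)) * x (j + 1) *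
          partialBell (n - j) m x :=
  stmt13_general n m x
end

section
/- Let v(x) = −1/W₀(eˣ · W₀⁻¹(−1/r)) for r < 0, where W₀ is the principal real branch of the Lambert W function and W₀⁻¹(s) = s·e^s. Then v satisfies the differential equation dv/dx = v²/(1−v) on any interval where it is defined and v < 1. -/
open Real Set

/-! The map `f(t) = t eᵗ` is a smooth increasing bijection of `(0, ∞)` with `f'(t) = (1 + t) eᵗ`,
so any right inverse `W` of it there is monotone with image `(0, ∞)`, hence continuous, and the
inverse function rule gives `W'(s) = 1 / ((1 + W s) e^{W s})`. Along `s = eˣ c` with `c > 0` this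
yields `(W(eˣ c))' = W / (1 + W)`, and for `v = -1/W` the chain rule turns this into
`v' = v² / (1 - v)`. -/

lemma hasDerivAt_mul_exp (t : ℝ) :
    HasDerivAt (fun t : ℝ => t * exp t) ((1 + t) * exp t) t :=
  ((hasDerivAt_id' t).mul (hasDerivAt_exp t)).congr_deriv (by ring)

lemma strictMonoOn_mul_exp : StrictMonoOn (fun t : ℝ => t * exp t) (Ici 0) :=
  fun _ ha _ _ hab => mul_lt_mul'' hab (exp_lt_exp.2 hab) ha (exp_pos _).le

namespace Set.RightInvOn

variable {W : ℝ → ℝ}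

lemma pos_of_mul_exp (hW : RightInvOn W (fun t => t * exp t) (Ioi 0)) {s : ℝ} (hs : 0 < s) :
    0 < W s :=
  pos_of_mul_pos_left ((hW hs).symm ▸ hs) (exp_pos _).le

lemma apply_mul_exp (hW : RightInvOn W (fun t => t * exp t) (Ioi 0)) {t : ℝ} (ht : 0 < t) :
    W (t * exp t) = t := by
  have hst : 0 < t * exp t := by positivity
  exact strictMonoOn_mul_exp.injOn (mem_Ici.2 (hW.pos_of_mul_exp hst).le) (mem_Ici.2 ht.le)
    (hW hst)

lemma strictMonoOn_of_mul_exp (hW : RightInvOn W (fun t => t * exp t) (Ioi 0)) :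
    StrictMonoOn W (Ioi 0) := by
  intro s hs s' hs' hlt
  by_contra! hle
  have := strictMonoOn_mul_exp.monotoneOn (mem_Ici.2 (hW.pos_of_mul_exp hs').le)
    (mem_Ici.2 (hW.pos_of_mul_exp hs).le) hle
  have h := hW hs; have h' := hW hs'
  simp only at h h'
  linarith

lemma image_Ioi_of_mul_exp (hW : RightInvOn W (fun t => t * exp t) (Ioi 0)) :
    W '' Ioi 0 = Ioi 0 := by
  refine Subset.antisymm (image_subset_iff.2 fun s hs => hW.pos_of_mul_exp hs) fun t ht => ?_
  exact ⟨t * exp t, mul_pos ht (exp_pos t), hW.apply_mul_exp ht⟩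

lemma continuousAt_of_mul_exp (hW : RightInvOn W (fun t => t * exp t) (Ioi 0)) {s : ℝ}
    (hs : 0 < s) : ContinuousAt W s :=
  hW.strictMonoOn_of_mul_exp.continuousAt_of_image_mem_nhds (Ioi_mem_nhds hs)
    (by rw [hW.image_Ioi_of_mul_exp]; exact Ioi_mem_nhds (hW.pos_of_mul_exp hs))

lemma hasDerivAt_of_mul_exp (hW : RightInvOn W (fun t => t * exp t) (Ioi 0)) {s : ℝ}
    (hs : 0 < s) : HasDerivAt W ((1 + W s) * exp (W s))⁻¹ s := by
  have hWs := hW.pos_of_mul_exp hs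
  refine (hasDerivAt_mul_exp (W s)).of_local_left_inverse (hW.continuousAt_of_mul_exp hs)
    (by positivity) ?_
  filter_upwards [Ioi_mem_nhds hs] with s' hs' using hW hs'

lemma hasDerivAt_neg_one_div_comp_exp_mul (hW : RightInvOn W (fun t => t * exp t) (Ioi 0))
    {c : ℝ} (hc : 0 < c) (x : ℝ) :
    HasDerivAt (fun y => -1 / W (exp y * c))
      ((-1 / W (exp x * c)) ^ 2 / (1 - -1 / W (exp x * c))) x := by
  have hs : 0 < exp x * c := by positivity
  have hw := hW.pos_of_mul_exp hs
  have hdiv := (hasDerivAt_const x (-1 : ℝ)).div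
    ((hW.hasDerivAt_of_mul_exp hs).comp x ((hasDerivAt_exp x).mul_const c)) hw.ne'
  refine hdiv.congr_deriv ?_
  simp only [Function.comp_apply]
  set w := W (exp x * c)
  have hwe : w * exp w = exp x * c := hW hs
  have h1w : 1 + w ≠ 0 := by positivity
  rw [← hwe]
  field_simp
  rw [show w - -1 = 1 + w by ring, div_self h1w]
  ring

end Set.RightInvOn

/-- Let `W` be the principal real branch `W₀` of the Lambert function: on
`[−1/e, ∞)` it takes values in `[−1, ∞)` and satisfies `W(s)·e^{W(s)} = s`
(this characterizes `W₀` there). For `r < 0`, the function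
`v(x) = −1/W₀(eˣ · W₀⁻¹(−1/r))`, where `W₀⁻¹(s) = s·e^s`, satisfies the
differential equation `dv/dx = v²/(1−v)` at every point where `v < 1`. -/
theorem stmt17 (W : ℝ → ℝ)
    (hW : ∀ s : ℝ, -Real.exp (-1) ≤ s → -1 ≤ W s ∧ W s * Real.exp (W s) = s)
    (r : ℝ) (hr : r < 0) :
    ∀ x : ℝ,
      (fun y : ℝ => -1 / W (Real.exp y * ((-1 / r) * Real.exp (-1 / r)))) x < 1 →
      HasDerivAt (fun y : ℝ => -1 / W (Real.exp y * ((-1 / r) * Real.exp (-1 / r))))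
        (((fun y : ℝ => -1 / W (Real.exp y * ((-1 / r) * Real.exp (-1 / r)))) x) ^ 2 /
          (1 - (fun y : ℝ => -1 / W (Real.exp y * ((-1 / r) * Real.exp (-1 / r)))) x)) x := by
  intro x _
  have hinv : RightInvOn W (fun t => t * exp t) (Ioi 0) := fun s hs =>
    (hW s (by linarith [exp_pos (-1), mem_Ioi.1 hs])).2
  have hc : 0 < -1 / r * exp (-1 / r) :=
    mul_pos (div_pos_of_neg_of_neg (by norm_num) hr) (exp_pos _)
  exact hinv.hasDerivAt_neg_one_div_comp_exp_mul hc x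
end
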